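/- Let E and F be real inner product spaces, let r be a positive integer, and let φ : Fin r → E and ψ : Fin r → F be families of vectors satisfying the orthonormality relation ⟨φ_i, φ_j⟩_E + ⟨ψ_i, ψ_j⟩_F = δ_{ij} for all i, j. Let M be the Gram matrix of φ in E and assume M is positive definite. Then for every x ∈ ℝ^r, ‖Σ_{j=1}^r x_j ψ_j‖_F ≤ (‖Σ_{j=1}^r x_j φ_j‖_E² + ‖Σ_{j=1}^r x_j ψ_j‖_F²)^{1/2} ≤ √(‖M⁻¹‖₂) · ‖Σ_{j=1}^r x_j φ_j‖_E. -/

import Mathlib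

open scoped Matrix RealInnerProductSpace

/-- The spectral norm of a real `r × r` matrix: the operator norm of the matrix
acting on Euclidean space `ℝ^r` with the `ℓ²` norm. -/
noncomputable def matrixSpectralNorm {r : ℕ} (A : Matrix (Fin r) (Fin r) ℝ) : ℝ :=
  ‖Matrix.toEuclideanCLM (𝕜 := ℝ) A‖

/-- The Gram matrix of a family `φ : Fin r → E` in a real inner product space `E`:
the `r × r` real matrix with entries `M i j = ⟪φ j, φ i⟫`. -/
noncomputable def gramMatrix {E : Type*} [NormedAddCommGroup E] [InnerProductSpace ℝ E]
    {r : ℕ} (φ : Fin r → E) : Matrix (Fin r) (Fin r) ℝ :=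
  Matrix.of fun i j => ⟪φ j, φ i⟫

/-!
Write `X = ∑ x j • φ j`. Joint orthonormality says that the two Gram matrices add up to the
identity, so `‖X‖² + ‖∑ x j • ψ j‖² = |x|²`, and it remains to show `|x|² ≤ ‖M⁻¹‖₂ ‖X‖²`.
With `u = M⁻¹ x` and `U = ∑ u j • φ j` we have `|x|² = xᵀ M u = ⟪X, U⟫` and
`‖U‖² = uᵀ M u = uᵀ x ≤ ‖M⁻¹‖₂ |x|²`, so Cauchy–Schwarz in `E` gives
`|x|⁴ ≤ ‖X‖² ‖U‖² ≤ ‖M⁻¹‖₂ ‖X‖² |x|²`.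
-/

open Matrix

section

variable {n E : Type*} [Fintype n] [NormedAddCommGroup E] [InnerProductSpace ℝ E]

theorem gramMatrix_eq_gram {r : ℕ} (φ : Fin r → E) : gramMatrix φ = gram ℝ φ :=
  Matrix.ext fun i j => real_inner_comm (φ i) (φ j)

theorem dotProduct_gram_mulVec (v : n → E) (x y : n → ℝ) :
    x ⬝ᵥ (gram ℝ v *ᵥ y) = ⟪∑ i, x i • v i, ∑ i, y i • v i⟫ := by
  simpa using star_dotProduct_gram_mulVec v x y

theorem norm_sum_smul_sq_eq_dotProduct_gram_mulVec (v : n → E) (x : n → ℝ) :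
    ‖∑ i, x i • v i‖ ^ 2 = x ⬝ᵥ (gram ℝ v *ᵥ x) := by
  rw [dotProduct_gram_mulVec, real_inner_self_eq_norm_sq]

theorem norm_sum_smul_sq_add_norm_sum_smul_sq [DecidableEq n] {F : Type*} [NormedAddCommGroup F]
    [InnerProductSpace ℝ F] {φ : n → E} {ψ : n → F} (h : gram ℝ φ + gram ℝ ψ = 1) (x : n → ℝ) :
    ‖∑ i, x i • φ i‖ ^ 2 + ‖∑ i, x i • ψ i‖ ^ 2 = x ⬝ᵥ x := by
  rw [norm_sum_smul_sq_eq_dotProduct_gram_mulVec, norm_sum_smul_sq_eq_dotProduct_gram_mulVec,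
    ← dotProduct_add, ← add_mulVec, h, one_mulVec]

theorem mulVec_dotProduct_le_norm_toEuclideanCLM_mul [DecidableEq n]
    (A : Matrix n n ℝ) (x : n → ℝ) :
    (A *ᵥ x) ⬝ᵥ x ≤ ‖toEuclideanCLM (𝕜 := ℝ) A‖ * (x ⬝ᵥ x) := by
  set y : EuclideanSpace ℝ n := WithLp.toLp 2 x
  have hinner : (A *ᵥ x) ⬝ᵥ x = ⟪toEuclideanCLM (𝕜 := ℝ) A y, y⟫ := by
    rw [toEuclideanCLM_toLp, EuclideanSpace.inner_toLp_toLp, star_trivial, dotProduct_comm]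
  have hnorm : x ⬝ᵥ x = ‖y‖ ^ 2 := by
    rw [← real_inner_self_eq_norm_sq, EuclideanSpace.inner_toLp_toLp, star_trivial]
  calc (A *ᵥ x) ⬝ᵥ x ≤ ‖toEuclideanCLM (𝕜 := ℝ) A y‖ * ‖y‖ := hinner ▸ real_inner_le_norm _ _
    _ ≤ ‖toEuclideanCLM (𝕜 := ℝ) A‖ * ‖y‖ * ‖y‖ := by
      gcongr; exact (toEuclideanCLM (𝕜 := ℝ) A).le_opNorm y
    _ = ‖toEuclideanCLM (𝕜 := ℝ) A‖ * (x ⬝ᵥ x) := by rw [hnorm]; ring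

theorem dotProduct_self_le_norm_toEuclideanCLM_gram_inv_mul [DecidableEq n] {v : n → E}
    (hdet : IsUnit (gram ℝ v).det) (x : n → ℝ) :
    x ⬝ᵥ x ≤ ‖toEuclideanCLM (𝕜 := ℝ) (gram ℝ v)⁻¹‖ * ‖∑ i, x i • v i‖ ^ 2 := by
  set c := ‖toEuclideanCLM (𝕜 := ℝ) (gram ℝ v)⁻¹‖
  set u := (gram ℝ v)⁻¹ *ᵥ x
  have hu : gram ℝ v *ᵥ u = x := by
    rw [mulVec_mulVec, mul_nonsing_inv _ hdet, one_mulVec]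
  have hxx : x ⬝ᵥ x = ⟪∑ i, x i • v i, ∑ i, u i • v i⟫ := by
    rw [← dotProduct_gram_mulVec, hu]
  have huu : ‖∑ i, u i • v i‖ ^ 2 ≤ c * (x ⬝ᵥ x) := by
    rw [norm_sum_smul_sq_eq_dotProduct_gram_mulVec, hu]
    exact mulVec_dotProduct_le_norm_toEuclideanCLM_mul _ x
  have hcs : (x ⬝ᵥ x) * (x ⬝ᵥ x) ≤ ‖∑ i, x i • v i‖ ^ 2 * ‖∑ i, u i • v i‖ ^ 2 := by
    simpa only [← hxx, real_inner_self_eq_norm_sq] using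
      real_inner_mul_inner_self_le (∑ i, x i • v i) (∑ i, u i • v i)
  rcases (show 0 ≤ x ⬝ᵥ x by simpa using dotProduct_self_star_nonneg x).eq_or_lt with hx | hx
  · rw [← hx]; positivity
  · refine le_of_mul_le_mul_right ?_ hx
    calc (x ⬝ᵥ x) * (x ⬝ᵥ x) ≤ ‖∑ i, x i • v i‖ ^ 2 * (c * (x ⬝ᵥ x)) := hcs.trans (by gcongr)
      _ = c * ‖∑ i, x i • v i‖ ^ 2 * (x ⬝ᵥ x) := by ring

end

theorem pod_inverse_estimate_improved_general
    {E F : Type*} [NormedAddCommGroup E] [InnerProductSpace ℝ E]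
    [NormedAddCommGroup F] [InnerProductSpace ℝ F]
    (r : ℕ) (φ : Fin r → E) (ψ : Fin r → F)
    (horth : ∀ i j : Fin r, ⟪φ i, φ j⟫ + ⟪ψ i, ψ j⟫ = if i = j then (1 : ℝ) else 0)
    (hMpos : (gramMatrix φ).PosDef) :
    ∀ x : Fin r → ℝ,
      ‖∑ j, x j • ψ j‖ ≤ Real.sqrt (‖∑ j, x j • φ j‖ ^ 2 + ‖∑ j, x j • ψ j‖ ^ 2) ∧
      Real.sqrt (‖∑ j, x j • φ j‖ ^ 2 + ‖∑ j, x j • ψ j‖ ^ 2) ≤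
        Real.sqrt (matrixSpectralNorm (gramMatrix φ)⁻¹) * ‖∑ j, x j • φ j‖ := by
  intro x
  rw [gramMatrix_eq_gram] at hMpos ⊢
  have hgram : gram ℝ φ + gram ℝ ψ = 1 :=
    Matrix.ext fun i j => by simpa [one_apply] using horth i j
  refine ⟨Real.le_sqrt_of_sq_le (le_add_of_nonneg_left (sq_nonneg _)), ?_⟩
  calc Real.sqrt (‖∑ j, x j • φ j‖ ^ 2 + ‖∑ j, x j • ψ j‖ ^ 2)
      ≤ Real.sqrt (matrixSpectralNorm (gram ℝ φ)⁻¹ * ‖∑ j, x j • φ j‖ ^ 2) := by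
        rw [norm_sum_smul_sq_add_norm_sum_smul_sq hgram]
        exact Real.sqrt_le_sqrt
          (dotProduct_self_le_norm_toEuclideanCLM_gram_inv_mul hMpos.det_pos.ne'.isUnit x)
    _ = Real.sqrt (matrixSpectralNorm (gram ℝ φ)⁻¹) * ‖∑ j, x j • φ j‖ := by
        rw [Real.sqrt_mul' _ (sq_nonneg _), Real.sqrt_sq (norm_nonneg _)]

/-- Improved POD inverse estimate: if the families `φ`, `ψ` satisfy the joint
orthonormality relation `⟪φ i, φ j⟫ + ⟪ψ i, ψ j⟫ = δ i j` and the Gram matrix `M` of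
`φ` is positive definite, then for every `x ∈ ℝ^r`,
`‖∑ x j • ψ j‖ ≤ (‖∑ x j • φ j‖² + ‖∑ x j • ψ j‖²)^(1/2) ≤ √(‖M⁻¹‖₂) ‖∑ x j • φ j‖`. -/
theorem pod_inverse_estimate_improved
    {E F : Type*} [NormedAddCommGroup E] [InnerProductSpace ℝ E]
    [NormedAddCommGroup F] [InnerProductSpace ℝ F]
    (r : ℕ) (hr : 0 < r) (φ : Fin r → E) (ψ : Fin r → F)
    (horth : ∀ i j : Fin r, ⟪φ i, φ j⟫ + ⟪ψ i, ψ j⟫ = if i = j then (1 : ℝ) else 0)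
    (hMpos : (gramMatrix φ).PosDef) :
    ∀ x : Fin r → ℝ,
      ‖∑ j, x j • ψ j‖ ≤ Real.sqrt (‖∑ j, x j • φ j‖ ^ 2 + ‖∑ j, x j • ψ j‖ ^ 2) ∧
      Real.sqrt (‖∑ j, x j • φ j‖ ^ 2 + ‖∑ j, x j • ψ j‖ ^ 2) ≤
        Real.sqrt (matrixSpectralNorm (gramMatrix φ)⁻¹) * ‖∑ j, x j • φ j‖ :=
  pod_inverse_estimate_improved_general r φ ψ horth hMpos
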